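/- Let c > 0 and let μ be a probability distribution on ℕ⁺ satisfying F_c(μ) = μ. Then for every i ∈ ℕ⁺, (i(i-1) + 2c) μ({i}) = (i+1) i μ({i+1}) + 2c (μ∗μ)({i}). -/

import Mathlib

open Filter Topology Set

noncomputable section

/-- Convolution of two (sub)probability mass functions on `ℕ∞ = ℕ⁺ ∪ {∞} ∪ {0}`,
with the convention `∞ + anything = ∞`. -/
def conv (μ ν : ℕ∞ → ℝ) : ℕ∞ → ℝ :=
  fun k => ∑' p : ℕ∞ × ℕ∞, if p.1 + p.2 = k then μ p.1 * ν p.2 else 0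

/-- The factor `(l(l-1)/2) / (l(l-1)/2 + c)`, the probability that the coalescence
from `l` to `l-1` lineages happens before an independent `Exp(c)` time. -/
def kingmanFactor (c : ℝ) (l : ℕ) : ℝ :=
  ((l : ℝ) * ((l : ℝ) - 1) / 2) / ((l : ℝ) * ((l : ℝ) - 1) / 2 + c)

/-- `pK c j i` : the probability that Kingman's coalescent started from `j` lineages
has exactly `i` lineages at an independent exponential time with rate `c`. -/
def pK (c : ℝ) (j : ℕ∞) (i : ℕ) : ℝ :=
  (c / ((i : ℝ) * ((i : ℝ) - 1) / 2 + c)) *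
    (if j = ⊤ then ∏' l : ℕ, kingmanFactor c (i + 1 + l)
     else ∏ l ∈ Finset.Icc (i + 1) j.toNat, kingmanFactor c l)

/-- The mass that `F_c μ` puts on a finite `k ∈ ℕ⁺`. -/
def FcFin (c : ℝ) (μ : ℕ∞ → ℝ) (k : ℕ) : ℝ :=
  ∑' j : ℕ∞, if (k : ℕ∞) ≤ j then conv μ μ j * pK c j k else 0

/-- The map `F_c` on distributions on `ℕ⁺ ∪ {∞}`; the mass at `∞` is the remaining mass. -/
def Fc (c : ℝ) (μ : ℕ∞ → ℝ) : ℕ∞ → ℝ :=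
  fun k =>
    if k = ⊤ then 1 - ∑' n : ℕ, FcFin c μ n
    else if k = 0 then 0 else FcFin c μ k.toNat

/-- `μ` is a probability distribution on `ℕ⁺ ∪ {∞}` (no mass at `0`). -/
def IsDist (μ : ℕ∞ → ℝ) : Prop :=
  (∀ k, 0 ≤ μ k) ∧ μ 0 = 0 ∧ HasSum μ 1

/-- The mean of a distribution on `ℕ⁺ ∪ {∞}` (ignoring the mass at `∞`). -/
def distMean (μ : ℕ∞ → ℝ) : ℝ := ∑' n : ℕ, (n : ℝ) * μ (n : ℕ∞)

/-- `μ` belongs to `S₁`: a probability distribution on `ℕ⁺` with finite mean. -/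
def MemS1 (μ : ℕ∞ → ℝ) : Prop :=
  IsDist μ ∧ μ ⊤ = 0 ∧ Summable (fun n : ℕ => (n : ℝ) * μ (n : ℕ∞))

/-- `StDom μ ν` : `μ ⪯ ν` in the usual stochastic order, i.e.
`μ([0,x]) ≥ ν([0,x])` for all `x ∈ [0,∞]`. -/
def StDom (μ ν : ℕ∞ → ℝ) : Prop :=
  ∀ x : ℕ∞, (∑' k : ℕ∞, if k ≤ x then ν k else 0) ≤ ∑' k : ℕ∞, if k ≤ x then μ k else 0

/-- The unit point mass at `a`. -/
def delta (a : ℕ∞) : ℕ∞ → ℝ := fun k => if k = a then 1 else 0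

end


/-!
Evaluate the fixed-point equation `μ = F_c(μ)` at `i` and at `i + 1`. For `j > i` the Kingman
probabilities satisfy `p_c(j, i) = (i(i+1)/2) / (i(i-1)/2 + c) · p_c(j, i+1)`, since their
products differ only by the factor `l = i + 1`. So the series for `F_c(μ)({i})` is its `j = i` term
`c / (i(i-1)/2 + c) · (μ∗μ)({i})` plus that ratio times the series for `F_c(μ)({i+1})`; the
term `j = ∞` vanishes because `μ` puts no mass at `∞`.
Clearing the denominator gives the recursion.
-/

lemma natCast_mul_natCast_sub_one_nonneg (l : ℕ) : 0 ≤ (l : ℝ) * ((l : ℝ) - 1) := by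
  rcases l with _ | l
  · simp
  · push_cast
    nlinarith

section Kingman

variable {c : ℝ}

lemma kingmanFactor_nonneg (hc : 0 ≤ c) (l : ℕ) : 0 ≤ kingmanFactor c l := by
  have := natCast_mul_natCast_sub_one_nonneg l
  unfold kingmanFactor
  positivity

lemma kingmanFactor_le_one (hc : 0 ≤ c) (l : ℕ) : kingmanFactor c l ≤ 1 := by
  have := natCast_mul_natCast_sub_one_nonneg l
  exact div_le_one_of_le₀ (by linarith) (by positivity)

lemma pK_natCast_nonneg (hc : 0 ≤ c) (n i : ℕ) : 0 ≤ pK c n i := by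
  have := natCast_mul_natCast_sub_one_nonneg i
  have := Finset.prod_nonneg fun l (_ : l ∈ Finset.Icc (i + 1) n) => kingmanFactor_nonneg hc l
  simp only [pK, ENat.natCast_ne_top, if_false, ENat.toNat_natCast]
  positivity

lemma pK_natCast_le_one (hc : 0 ≤ c) (n i : ℕ) : pK c n i ≤ 1 := by
  have := natCast_mul_natCast_sub_one_nonneg i
  simp only [pK, ENat.natCast_ne_top, if_false, ENat.toNat_natCast]
  refine mul_le_one₀ (div_le_one_of_le₀ (by linarith) (by positivity))
    (Finset.prod_nonneg fun l _ => kingmanFactor_nonneg hc l) ?_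
  exact Finset.prod_le_one (fun l _ => kingmanFactor_nonneg hc l)
    (fun l _ => kingmanFactor_le_one hc l)

lemma pK_natCast_self (i : ℕ) : pK c i i = c / ((i : ℝ) * ((i : ℝ) - 1) / 2 + c) := by
  simp [pK]

lemma pK_natCast_eq_mul_pK_succ {i n : ℕ} (h : i < n) :
    pK c n i = ((i : ℝ) + 1) * i / 2 / ((i : ℝ) * ((i : ℝ) - 1) / 2 + c) * pK c n (i + 1) := by
  simp only [pK, ENat.natCast_ne_top, if_false, ENat.toNat_natCast]
  rw [← Finset.insert_Icc_add_one_left_eq_Icc h, Finset.prod_insert (by simp), kingmanFactor]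
  push_cast
  ring

end Kingman

section Convolution

variable {μ ν : ℕ∞ → ℝ}

lemma conv_top (hμ : μ ⊤ = 0) (hν : ν ⊤ = 0) : conv μ ν ⊤ = 0 := by
  refine (tsum_congr fun p => ?_).trans tsum_zero
  split_ifs with h
  · rcases ENat.add_eq_top.mp h with h | h <;> simp [h, hμ, hν]
  · rfl

lemma conv_nonneg (hμ : ∀ k, 0 ≤ μ k) (hν : ∀ k, 0 ≤ ν k) (k : ℕ∞) : 0 ≤ conv μ ν k :=
  tsum_nonneg fun p => by split_ifs; exacts [mul_nonneg (hμ _) (hν _), le_rfl]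

lemma summable_conv (hμ₀ : ∀ k, 0 ≤ μ k) (hν₀ : ∀ k, 0 ≤ ν k) (hμ : Summable μ)
    (hν : Summable ν) : Summable (conv μ ν) := by
  have hfib := (hμ.mul_of_nonneg hν hμ₀ hν₀).hasSum.tsum_fiberwise fun p : ℕ∞ × ℕ∞ => p.1 + p.2
  refine hfib.summable.congr fun k => ?_
  rw [tsum_subtype _ fun q : ℕ∞ × ℕ∞ => μ q.1 * ν q.2, conv]
  refine tsum_congr fun p => ?_
  by_cases h : p.1 + p.2 = k <;> simp [h]

end Convolution

section FixedPoint

variable {c : ℝ} {μ : ℕ∞ → ℝ}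

lemma summable_FcFin_summand (hc : 0 ≤ c) (hμ₀ : ∀ k, 0 ≤ μ k) (hμ : Summable μ)
    (htop : μ ⊤ = 0) (k : ℕ) :
    Summable fun j : ℕ∞ => if (k : ℕ∞) ≤ j then conv μ μ j * pK c j k else 0 := by
  refine (summable_conv hμ₀ hμ₀ hμ hμ).of_nonneg_of_le (fun j => ?_) (fun j => ?_)
  · induction j using ENat.recTopCoe with
    | top => simp [conv_top htop htop]
    | coe n =>
      split_ifs
      exacts [mul_nonneg (conv_nonneg hμ₀ hμ₀ n) (pK_natCast_nonneg hc n k), le_rfl]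
  · induction j using ENat.recTopCoe with
    | top => simp [conv_top htop htop]
    | coe n =>
      split_ifs
      exacts [mul_le_of_le_one_right (conv_nonneg hμ₀ hμ₀ n) (pK_natCast_le_one hc n k),
        conv_nonneg hμ₀ hμ₀ n]

lemma FcFin_summand_eq (htop : μ ⊤ = 0) (i : ℕ) (j : ℕ∞) :
    (if (i : ℕ∞) ≤ j then conv μ μ j * pK c j i else 0) =
      (if j = i then c / ((i : ℝ) * ((i : ℝ) - 1) / 2 + c) * conv μ μ i else 0) +
        ((i : ℝ) + 1) * i / 2 / ((i : ℝ) * ((i : ℝ) - 1) / 2 + c) *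
          (if ((i + 1 : ℕ) : ℕ∞) ≤ j then conv μ μ j * pK c j (i + 1) else 0) := by
  induction j using ENat.recTopCoe with
  | top => simp [conv_top htop htop]
  | coe n =>
    simp only [Nat.cast_le, Nat.cast_inj]
    rcases lt_trichotomy n i with h | rfl | h
    · simp [h.ne, h.not_ge, show ¬ i + 1 ≤ n by omega]
    · simp [pK_natCast_self, mul_comm]
    · rw [if_pos h.le, if_neg h.ne', if_pos (show i + 1 ≤ n from h), pK_natCast_eq_mul_pK_succ h]
      ring

theorem FcFin_eq_add_mul_FcFin_succ (hc : 0 ≤ c) (hμ₀ : ∀ k, 0 ≤ μ k) (hμ : Summable μ)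
    (htop : μ ⊤ = 0) (i : ℕ) :
    FcFin c μ i = c / ((i : ℝ) * ((i : ℝ) - 1) / 2 + c) * conv μ μ i +
      ((i : ℝ) + 1) * i / 2 / ((i : ℝ) * ((i : ℝ) - 1) / 2 + c) * FcFin c μ (i + 1) := by
  rw [FcFin, tsum_congr (FcFin_summand_eq htop i)]
  exact ((hasSum_ite_eq _ _).add
    ((summable_FcFin_summand hc hμ₀ hμ htop (i + 1)).hasSum.mul_left _)).tsum_eq

lemma Fc_natCast {k : ℕ} (hk : k ≠ 0) : Fc c μ k = FcFin c μ k := by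
  simp [Fc, hk]

end FixedPoint

/-- If `μ` is a distribution on `ℕ⁺` with `F_c(μ) = μ`, then for every
`i ∈ ℕ⁺`, `(i(i-1) + 2c) μ({i}) = (i+1)i μ({i+1}) + 2c (μ∗μ)({i})`. -/
theorem fixed_point_recursion (c : ℝ) (hc : 0 < c) (μ : ℕ∞ → ℝ) (hμ : IsDist μ)
    (htop : μ ⊤ = 0) (hfix : Fc c μ = μ) (i : ℕ) (hi : 1 ≤ i) :
    ((i : ℝ) * ((i : ℝ) - 1) + 2 * c) * μ (i : ℕ∞) =
      ((i : ℝ) + 1) * (i : ℝ) * μ ((i + 1 : ℕ) : ℕ∞) + 2 * c * conv μ μ (i : ℕ∞) := by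
  obtain ⟨hμ₀, -, hμ⟩ := hμ
  have hμ_eq : ∀ k : ℕ, k ≠ 0 → μ k = FcFin c μ k := fun k hk => by
    rw [← Fc_natCast hk, hfix]
  have hrec := FcFin_eq_add_mul_FcFin_succ hc.le hμ₀ hμ.summable htop i
  rw [← hμ_eq i (by omega), ← hμ_eq (i + 1) (by omega)] at hrec
  have hden : (i : ℝ) * ((i : ℝ) - 1) + 2 * c ≠ 0 := by
    have := natCast_mul_natCast_sub_one_nonneg i
    positivity
  rw [hrec]
  field_simp
  ring
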